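/- arXiv:1703.00377 — 2 statements merged into one kernel-verified Lean document; each statement's English description precedes it below -/
import Mathlib

section
/- Let $\gamma \in (0,1]$, $G > 0$, $T \in \mathbb{N}$, $R \geq 0$ with $R < TG^2$, and let $c = \frac{1-\gamma+\sqrt{1-\gamma(1-R/(TG^2))}}{\gamma}$. Suppose $(\Delta_i^t)_{t=1}^T$ are vectors in $\mathbb{R}^m$ with $\sum_{t=1}^T \|\Delta_i^t\|^2 \leq c^2G^2T$, and vectors $(\nabla^t)_{t=1}^T$ with $\|\nabla^t\| \leq G$, and $(h^t)_{t=1}^T$ satisfy the edge inequality $\sum_{t=1}^T \|\Delta_i^t + \nabla^t - h^t\|^2 \leq (1-\gamma)\sum_{t=1}^T \|\Delta_i^t + \nabla^t\|^2 + R$. Then $\sum_{t=1}^T \|\Delta_i^t + \nabla^t - h^t\|^2 \leq c^2G^2T$. -/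
set_option maxHeartbeats 1000000



/-- Inductive step of the residual-shrinkage lemma: under the edge inequality and
the bounds on residuals and gradients, the new residuals `Δ_i^t + ∇^t - h^t`
have total squared norm at most `c²G²T`. -/
theorem stmt_7 {m : ℕ} (T : ℕ) (hT : 0 < T) (γ G R : ℝ)
    (hγ : γ ∈ Set.Ioc (0 : ℝ) 1) (hG : 0 < G) (hR : 0 ≤ R) (hRT : R < T * G ^ 2)
    (c : ℝ) (hc : c = (1 - γ + Real.sqrt (1 - γ * (1 - R / (T * G ^ 2)))) / γ)
    (Δ grad h : Fin T → EuclideanSpace ℝ (Fin m))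
    (hΔ : ∑ t, ‖Δ t‖ ^ 2 ≤ c ^ 2 * G ^ 2 * T)
    (hgrad : ∀ t, ‖grad t‖ ≤ G)
    (hedge : ∑ t, ‖Δ t + grad t - h t‖ ^ 2 ≤ (1 - γ) * ∑ t, ‖Δ t + grad t‖ ^ 2 + R) :
    ∑ t, ‖Δ t + grad t - h t‖ ^ 2 ≤ c ^ 2 * G ^ 2 * T := by
  obtain ⟨hγ0, hγ1⟩ := hγ
  have hTpos : (0:ℝ) < T := by exact_mod_cast hT
  have hTG : (0:ℝ) < T * G ^ 2 := by positivity
  have hρ : R / (T * G ^ 2) < 1 := (div_lt_one hTG).2 hRT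
  have hρ0 : 0 ≤ R / (T * G ^ 2) := by positivity
  have harg : 0 ≤ 1 - γ * (1 - R / (T * G ^ 2)) := by nlinarith
  set s := Real.sqrt (1 - γ * (1 - R / (T * G ^ 2))) with hs
  have hs0 : 0 ≤ s := Real.sqrt_nonneg _
  have hs2 : s ^ 2 = 1 - γ * (1 - R / (T * G ^ 2)) := Real.sq_sqrt harg
  have hcγ : γ * c = 1 - γ + s := by
    rw [hc]; field_simp
  have hc0 : 0 ≤ c := by
    rw [hc]; apply div_nonneg _ hγ0.le; nlinarith
  -- key identity
  have hkey : c ^ 2 * G ^ 2 * T = (1 - γ) * (1 + c) ^ 2 * G ^ 2 * T + R := by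
    have hRdiv : R / (T * G ^ 2) * (T * G ^ 2) = R := div_mul_cancel₀ R hTG.ne'
    have h1 : γ * (c ^ 2 - (1 - γ) * (1 + c) ^ 2 - R / (T * G ^ 2)) = 0 := by
      nlinarith [hs2, hcγ]
    have h2 : c ^ 2 - (1 - γ) * (1 + c) ^ 2 - R / (T * G ^ 2) = 0 := by
      rcases mul_eq_zero.1 h1 with h | h
      · exact absurd h hγ0.ne'
      · exact h
    have h3 : c ^ 2 - (1 - γ) * (1 + c) ^ 2 = R / (T * G ^ 2) := by linarith
    calc c ^ 2 * G ^ 2 * T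
        = (c ^ 2 - (1 - γ) * (1 + c) ^ 2) * (T * G ^ 2)
            + (1 - γ) * (1 + c) ^ 2 * G ^ 2 * T := by ring
      _ = R / (T * G ^ 2) * (T * G ^ 2)
            + (1 - γ) * (1 + c) ^ 2 * G ^ 2 * T := by rw [h3]
      _ = (1 - γ) * (1 + c) ^ 2 * G ^ 2 * T + R := by rw [hRdiv]; ring
  -- Cauchy-Schwarz on sum of norms
  set S := ∑ t, ‖Δ t‖ with hS
  have hS0 : 0 ≤ S := Finset.sum_nonneg fun t _ => norm_nonneg _
  have hCS : S ^ 2 ≤ T * ∑ t, ‖Δ t‖ ^ 2 := by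
    have := sq_sum_le_card_mul_sum_sq (s := (Finset.univ : Finset (Fin T)))
      (f := fun t => ‖Δ t‖)
    simpa using this
  have hSle : S ≤ c * G * T := by
    have h1 : S ^ 2 ≤ (c * G * T) ^ 2 := by nlinarith
    have h2 : 0 ≤ c * G * T := by positivity
    exact le_of_sq_le_sq h1 h2
  -- bound ∑ ‖Δ + grad‖²
  have hsum : ∑ t, ‖Δ t + grad t‖ ^ 2 ≤ (∑ t, ‖Δ t‖ ^ 2) + 2 * G * S + G ^ 2 * T := by
    have h1 : ∀ t, ‖Δ t + grad t‖ ^ 2 ≤ ‖Δ t‖ ^ 2 + 2 * G * ‖Δ t‖ + G ^ 2 := by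
      intro t
      have h := norm_add_le (Δ t) (grad t)
      have hg := hgrad t
      have ha := norm_nonneg (Δ t)
      have hb := norm_nonneg (Δ t + grad t)
      have h2 : ‖Δ t + grad t‖ ^ 2 ≤ (‖Δ t‖ + G) ^ 2 :=
        pow_le_pow_left₀ hb (by linarith) 2
      nlinarith
    calc ∑ t, ‖Δ t + grad t‖ ^ 2
        ≤ ∑ t, (‖Δ t‖ ^ 2 + 2 * G * ‖Δ t‖ + G ^ 2) := Finset.sum_le_sum fun t _ => h1 t
      _ = (∑ t, ‖Δ t‖ ^ 2) + 2 * G * S + G ^ 2 * T := by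
          simp [Finset.sum_add_distrib, Finset.mul_sum, hS, mul_comm]
  have hsum2 : ∑ t, ‖Δ t + grad t‖ ^ 2 ≤ (1 + c) ^ 2 * G ^ 2 * T := by
    have : (1 + c) ^ 2 * G ^ 2 * T
        = c ^ 2 * G ^ 2 * T + 2 * G * (c * G * T) + G ^ 2 * T := by ring
    rw [this]
    have h2G : 2 * G * S ≤ 2 * G * (c * G * T) := by nlinarith
    linarith
  have h1γ : 0 ≤ 1 - γ := by linarith
  calc ∑ t, ‖Δ t + grad t - h t‖ ^ 2
      ≤ (1 - γ) * ∑ t, ‖Δ t + grad t‖ ^ 2 + R := hedge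
    _ ≤ (1 - γ) * ((1 + c) ^ 2 * G ^ 2 * T) + R := by
        have := mul_le_mul_of_nonneg_left hsum2 h1γ
        linarith
    _ = c ^ 2 * G ^ 2 * T := by linarith [hkey]
end

section
/- Suppose loss functions $\ell_t$ ($t=1,\dots,T$) are $\lambda$-strongly convex, $\beta$-smooth, differentiable, and suppose vectors $y_t^{i-1}, y_t^i \in \mathbb{R}^m$ satisfy $y_t^i = y_t^{i-1} - \eta h_t$, where the predictions $h_t$ satisfy both: (a) $\sum_t 2\nabla\ell_t(y_t^{i-1})^T h_t \geq \gamma \sum_t \|\nabla\ell_t(y_t^{i-1})\|^2 - R$, and (b) $\sum_t \|h_t\|^2 \leq (4-2\gamma)\sum_t \|\nabla\ell_t(y_t^{i-1})\|^2 + 2R$. Let $f^*_t \in \mathbb{R}^m$ be arbitrary comparators and define $\Delta_{i-1} = \sum_t(\ell_t(y_t^{i-1}) - \ell_t(f^*_t))$, $\Delta_i = \sum_t(\ell_t(y_t^i) - \ell_t(f^*_t))$. Assume additionally $\ell_t(f^*_t) \leq \min_y \ell_t(y) + 0$ (i.e., $f^*_t$ minimizes $\ell_t$). Then $\Delta_i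 \leq \Delta_{i-1}\left[1 - (\eta\gamma\lambda - \beta\eta^2\lambda(4-2\gamma))\right] + (\frac{\eta}{2} + \beta\eta^2)R$, provided $\frac{\eta\gamma}{2} - \beta\eta^2(2-\gamma) \geq 0$. -/
open scoped RealInnerProductSpace

/-- Core one-iteration recursion of Theorem 1: under the edge-derived
inequalities (a) and (b), strong convexity, smoothness and the step-size
condition, the regret contracts: `Δ_i ≤ Δ_{i-1}(1 - (ηγλ - βη²λ(4-2γ))) + (η/2 + βη²)R`. -/
theorem stmt_10 {m T : ℕ} (lam β γ η R : ℝ)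
    (hlam : 0 < lam) (hβ : 0 < β) (hγ : γ ∈ Set.Ioc (0 : ℝ) 1) (hη : 0 < η) (hR : 0 ≤ R)
    (ℓ : Fin T → EuclideanSpace ℝ (Fin m) → ℝ)
    (g : Fin T → EuclideanSpace ℝ (Fin m) → EuclideanSpace ℝ (Fin m))
    (hdiff : ∀ t x, HasGradientAt (ℓ t) (g t x) x)
    (hsc : ∀ t x₂ x₁, lam / 2 * ‖x₁ - x₂‖ ^ 2 ≤ ℓ t x₁ - ℓ t x₂ - ⟪g t x₂, x₁ - x₂⟫)
    (hsm : ∀ t x₂ x₁, ℓ t x₁ - ℓ t x₂ - ⟪g t x₂, x₁ - x₂⟫ ≤ β / 2 * ‖x₁ - x₂‖ ^ 2)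
    (yprev ynext h fstar : Fin T → EuclideanSpace ℝ (Fin m))
    (hupdate : ∀ t, ynext t = yprev t - η • h t)
    (ha : γ * ∑ t, ‖g t (yprev t)‖ ^ 2 - R ≤ ∑ t, 2 * ⟪g t (yprev t), h t⟫)
    (hb : ∑ t, ‖h t‖ ^ 2 ≤ (4 - 2 * γ) * ∑ t, ‖g t (yprev t)‖ ^ 2 + 2 * R)
    (hmin : ∀ t y, ℓ t (fstar t) ≤ ℓ t y)
    (hstep : 0 ≤ η * γ / 2 - β * η ^ 2 * (2 - γ)) :
    (∑ t, (ℓ t (ynext t) - ℓ t (fstar t))) ≤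
      (∑ t, (ℓ t (yprev t) - ℓ t (fstar t))) * (1 - (η * γ * lam - β * η ^ 2 * lam * (4 - 2 * γ)))
        + (η / 2 + β * η ^ 2) * R := by
  set G := ∑ t, ‖g t (yprev t)‖ ^ 2 with hGdef
  set S := ∑ t, ⟪g t (yprev t), h t⟫ with hSdef
  set H := ∑ t, ‖h t‖ ^ 2 with hHdef
  set Δ := ∑ t, (ℓ t (yprev t) - ℓ t (fstar t)) with hΔdef
  have hsum : (∑ t, (ℓ t (ynext t) - ℓ t (fstar t))) ≤
      Δ - η * S + β / 2 * η ^ 2 * H := by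
    have key : ∀ t : Fin T, ℓ t (ynext t) - ℓ t (fstar t) ≤
        (ℓ t (yprev t) - ℓ t (fstar t)) - η * ⟪g t (yprev t), h t⟫
          + β / 2 * η ^ 2 * ‖h t‖ ^ 2 := by
      intro t
      have hsmt := hsm t (yprev t) (ynext t)
      rw [hupdate t] at hsmt ⊢
      have h1 : yprev t - η • h t - yprev t = -(η • h t) := by abel
      rw [h1, inner_neg_right, real_inner_smul_right, norm_neg, norm_smul,
        Real.norm_eq_abs, abs_of_pos hη] at hsmt
      nlinarith [hsmt]
    calc (∑ t, (ℓ t (ynext t) - ℓ t (fstar t)))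
        ≤ ∑ t, ((ℓ t (yprev t) - ℓ t (fstar t)) - η * ⟪g t (yprev t), h t⟫
            + β / 2 * η ^ 2 * ‖h t‖ ^ 2) := Finset.sum_le_sum fun t _ => key t
      _ = Δ - η * S + β / 2 * η ^ 2 * H := by
          rw [hΔdef, hSdef, hHdef, Finset.sum_add_distrib, Finset.sum_sub_distrib,
            Finset.mul_sum, Finset.mul_sum]
  have hPL : 2 * lam * Δ ≤ G := by
    rw [hΔdef, hGdef, Finset.mul_sum]
    apply Finset.sum_le_sum
    intro t _
    have h1 := hsc t (yprev t) (fstar t)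
    have h2 := abs_real_inner_le_norm (g t (yprev t)) (fstar t - yprev t)
    have h3 : -(‖g t (yprev t)‖ * ‖fstar t - yprev t‖) ≤ ⟪g t (yprev t), fstar t - yprev t⟫ :=
      neg_le_of_abs_le h2
    nlinarith [sq_nonneg (‖g t (yprev t)‖ - lam * ‖fstar t - yprev t‖), hlam,
      sq_nonneg ‖fstar t - yprev t‖]
  have ha' : η * (γ * G - R) ≤ η * (2 * S) := by
    have : ∑ t, 2 * ⟪g t (yprev t), h t⟫ = 2 * S := by
      rw [hSdef, Finset.mul_sum]
    rw [this] at ha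
    exact mul_le_mul_of_nonneg_left ha hη.le
  have hb' : β / 2 * η ^ 2 * H ≤ β / 2 * η ^ 2 * ((4 - 2 * γ) * G + 2 * R) :=
    mul_le_mul_of_nonneg_left hb (by positivity)
  have hprod : 0 ≤ (η * γ / 2 - β * η ^ 2 * (2 - γ)) * (G - 2 * lam * Δ) :=
    mul_nonneg hstep (by linarith)
  nlinarith [hsum, ha', hb', hprod]
end
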